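/- Consider the system dξ/dτ = −ξ + θ + 2ξθ − θ² − ξ³ + ξ²θ, dθ/dτ = 1 − 3θ + ξ² + 2θ² − ξ²θ + ξθ², and let F(ξ,θ) = ((ξ² + (θ − 1)²)/(2θ − 1 − ξ²))·exp(2·arctan(ξ/(θ − 1))) on the set G = {(ξ,θ) : θ ≠ 1 and 1 − 2θ + ξ² ≠ 0}. Then F is differentiable on G and (−ξ + θ + 2ξθ − θ² − ξ³ + ξ²θ)·∂F/∂ξ(ξ,θ) + (1 − 3θ + ξ² + 2θ² − ξ²θ + ξθ²)·∂F/∂θ(ξ,θ) = 0 for all (ξ,θ) ∈ G; that is, F is a general autonomous integral of the system on any domain contained in G. -/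

import Mathlib

/-- `F(ξ,θ) = ((ξ² + (θ − 1)²)/(2θ − 1 − ξ²))·exp(2·arctan(ξ/(θ − 1)))`. -/
noncomputable def F11 : ℝ × ℝ → ℝ :=
  fun p => ((p.1 ^ 2 + (p.2 - 1) ^ 2) / (2 * p.2 - 1 - p.1 ^ 2)) *
    Real.exp (2 * Real.arctan (p.1 / (p.2 - 1)))

/-!
`F` is a Darboux integral. The polynomials `N = ξ² + (θ - 1)²` and `D = 2θ - 1 - ξ²` are
Darboux polynomials of the vector field `V`, with cofactors `V N = 2 (2θ - 1 - ξ² + ξθ) N` and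
`V D = 2 (θ - 1 - ξ² + ξθ) D`, while the angle `φ = arctan (ξ / (θ - 1))` satisfies `V φ = -θ`.
Since `log F = log N - log D + 2 φ`, these rates cancel, so `V F = 0`.
-/

open ContinuousLinearMap

section

variable {E : Type*} [NormedAddCommGroup E] [NormedSpace ℝ E] {f g c : E → ℝ}
  {f' g' c' : E →L[ℝ] ℝ} {p : E}

theorem HasFDerivAt.arctan_div (hf : HasFDerivAt f f' p) (hg : HasFDerivAt g g' p)
    (hg0 : g p ≠ 0) :
    HasFDerivAt (fun q => Real.arctan (f q / g q))
      ((f p ^ 2 + g p ^ 2)⁻¹ • (g p • f' - f p • g')) p := by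
  have hinv := (hasDerivAt_inv hg0).comp_hasFDerivAt p hg
  refine (hf.fun_mul hinv).arctan.congr_of_eventuallyEq (.of_forall fun q => ?_)
    |>.congr_fderiv (ContinuousLinearMap.ext fun v => ?_)
  · simp [div_eq_mul_inv]
  · simp only [Function.comp_apply, one_div, neg_smul, smul_neg, smul_add, add_apply, neg_apply,
      smul_apply, smul_eq_mul, sub_apply]
    field_simp
    ring

theorem HasFDerivAt.div_mul_exp (hf : HasFDerivAt f f' p) (hg : HasFDerivAt g g' p)
    (hc : HasFDerivAt c c' p) (hg0 : g p ≠ 0) :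
    HasFDerivAt (fun q => f q / g q * Real.exp (c q))
      ((Real.exp (c p) / g p) • (f' - (f p / g p) • g' + f p • c')) p := by
  have hinv := (hasDerivAt_inv hg0).comp_hasFDerivAt p hg
  refine ((hf.fun_mul hinv).fun_mul hc.exp).congr_of_eventuallyEq (.of_forall fun q => ?_)
    |>.congr_fderiv (ContinuousLinearMap.ext fun v => ?_)
  · simp [div_eq_mul_inv]
  · simp only [Function.comp_apply, neg_smul, smul_neg, smul_add, add_apply, smul_apply,
      smul_eq_mul, neg_apply, sub_apply]
    field_simp
    ring

theorem HasFDerivAt.fderiv_div_mul_exp_apply_eq_zero (hf : HasFDerivAt f f' p)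
    (hg : HasFDerivAt g g' p) (hc : HasFDerivAt c c' p) (hg0 : g p ≠ 0) {v : E} {kf kg : ℝ}
    (hfv : f' v = kf * f p) (hgv : g' v = kg * g p) (hcv : c' v = kg - kf) :
    fderiv ℝ (fun q => f q / g q * Real.exp (c q)) p v = 0 := by
  rw [(hf.div_mul_exp hg hc hg0).fderiv]
  simp only [smul_apply, add_apply, sub_apply, hfv, hgv, hcv, smul_eq_mul]
  field_simp
  ring

end

theorem ContinuousLinearMap.apply_prod_eq_add {R M : Type*} [Semiring R] [TopologicalSpace R]
    [AddCommMonoid M] [Module R M] [TopologicalSpace M] (L : R × R →L[R] M) (a b : R) :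
    L (a, b) = a • L (1, 0) + b • L (0, 1) := by
  rw [← map_smul, ← map_smul, ← map_add]
  simp

theorem hasFDerivAt_F11_numer (p : ℝ × ℝ) :
    HasFDerivAt (fun q : ℝ × ℝ => q.1 ^ 2 + (q.2 - 1) ^ 2)
      ((2 * p.1) • fst ℝ ℝ ℝ + (2 * (p.2 - 1)) • snd ℝ ℝ ℝ) p := by
  have hx : HasFDerivAt (fun q : ℝ × ℝ => q.1) (fst ℝ ℝ ℝ) p := hasFDerivAt_fst
  have hy : HasFDerivAt (fun q : ℝ × ℝ => q.2 - 1) (snd ℝ ℝ ℝ) p := hasFDerivAt_snd.sub_const 1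
  refine ((hx.fun_mul hx).fun_add (hy.fun_mul hy)).congr_of_eventuallyEq
    (.of_forall fun q => by simp only [sq]) |>.congr_fderiv (ContinuousLinearMap.ext fun v => ?_)
  simp only [add_apply, smul_apply, coe_fst', coe_snd', smul_eq_mul]
  ring

theorem hasFDerivAt_F11_denom (p : ℝ × ℝ) :
    HasFDerivAt (fun q : ℝ × ℝ => 2 * q.2 - 1 - q.1 ^ 2)
      ((2 : ℝ) • snd ℝ ℝ ℝ - (2 * p.1) • fst ℝ ℝ ℝ) p := by
  have hx : HasFDerivAt (fun q : ℝ × ℝ => q.1) (fst ℝ ℝ ℝ) p := hasFDerivAt_fst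
  have hy : HasFDerivAt (fun q : ℝ × ℝ => q.2) (snd ℝ ℝ ℝ) p := hasFDerivAt_snd
  refine (((hy.const_mul 2).sub_const 1).fun_sub (hx.fun_mul hx)).congr_of_eventuallyEq
    (.of_forall fun q => by simp only [sq]) |>.congr_fderiv (ContinuousLinearMap.ext fun v => ?_)
  simp only [add_apply, sub_apply, smul_apply, coe_fst', coe_snd', smul_eq_mul]
  ring

theorem hasFDerivAt_F11_angle {p : ℝ × ℝ} (hp : p.2 - 1 ≠ 0) :
    HasFDerivAt (fun q : ℝ × ℝ => 2 * Real.arctan (q.1 / (q.2 - 1)))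
      ((2 : ℝ) • (p.1 ^ 2 + (p.2 - 1) ^ 2)⁻¹ • ((p.2 - 1) • fst ℝ ℝ ℝ - p.1 • snd ℝ ℝ ℝ)) p :=
  (hasFDerivAt_fst.arctan_div (hasFDerivAt_snd.sub_const 1) hp).const_mul 2

/-- `F` is a general autonomous integral of the system
`dξ/dτ = −ξ + θ + 2ξθ − θ² − ξ³ + ξ²θ`,
`dθ/dτ = 1 − 3θ + ξ² + 2θ² − ξ²θ + ξθ²` on
`G = {(ξ,θ) : θ ≠ 1 ∧ 1 − 2θ + ξ² ≠ 0}`. -/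
theorem F11_general_autonomous_integral :
    ∀ p : ℝ × ℝ, p.2 ≠ 1 → 1 - 2 * p.2 + p.1 ^ 2 ≠ 0 →
      DifferentiableAt ℝ F11 p ∧
      (-p.1 + p.2 + 2 * p.1 * p.2 - p.2 ^ 2 - p.1 ^ 3 + p.1 ^ 2 * p.2) *
          fderiv ℝ F11 p (1, 0) +
        (1 - 3 * p.2 + p.1 ^ 2 + 2 * p.2 ^ 2 - p.1 ^ 2 * p.2 + p.1 * p.2 ^ 2) *
          fderiv ℝ F11 p (0, 1) = 0 := by
  intro p hθ hG
  have hu : p.2 - 1 ≠ 0 := sub_ne_zero.mpr hθ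
  have hD : 2 * p.2 - 1 - p.1 ^ 2 ≠ 0 := by contrapose! hG; linarith
  have hN : p.1 ^ 2 + (p.2 - 1) ^ 2 ≠ 0 := by positivity
  have hnum := hasFDerivAt_F11_numer p
  have hden := hasFDerivAt_F11_denom p
  have hang := hasFDerivAt_F11_angle hu
  unfold F11
  refine ⟨(hnum.div_mul_exp hden hang hD).differentiableAt, ?_⟩
  rw [← smul_eq_mul _ (fderiv ℝ _ p (1, 0)), ← smul_eq_mul _ (fderiv ℝ _ p (0, 1)),
    ← apply_prod_eq_add]
  refine hnum.fderiv_div_mul_exp_apply_eq_zero hden hang hD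
    (kf := 2 * (2 * p.2 - 1 - p.1 ^ 2 + p.1 * p.2)) (kg := 2 * (p.2 - 1 - p.1 ^ 2 + p.1 * p.2))
    ?numer_cofactor ?denom_cofactor ?angle_rate
  case numer_cofactor =>
    simp only [add_apply, smul_apply, coe_fst', coe_snd', smul_eq_mul]
    ring
  case denom_cofactor =>
    simp only [sub_apply, smul_apply, coe_fst', coe_snd', smul_eq_mul]
    ring
  case angle_rate =>
    simp only [smul_apply, sub_apply, coe_fst', coe_snd', smul_eq_mul]
    field_simp
    ring
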